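/- arXiv:1908.09343 — 3 statements merged into one kernel-verified Lean document; each statement's English description precedes it below -/
import Mathlib

section
/- If the ISC settlement declares the execution successful exactly when the set of dirty transactions is empty, and a transaction is dirty iff it is eligible to be opened (all its preconditions are in state correct) but its own state is not correct, then: the execution is declared successful if and only if every transaction in the dependency graph is in state correct, assuming the dependency graph is a finite DAG in which every transaction with all source predecessors correct becomes eligible. -/
inductive TxState : Type
  | unknown | init | inited | opn | opened | closed | correct
  deriving DecidableEq, Repr

theorem isc_success_iff_all_correct_general {V : Type*}
    (E : V → V → Prop) (hwf : WellFounded E)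
    (state : V → TxState)
    (eligible : V → Prop)
    (heligible : ∀ v, eligible v ↔ ∀ u, E u v → state u = TxState.correct)
    (dirty : V → Prop)
    (hdirty : ∀ v, dirty v ↔ eligible v ∧ state v ≠ TxState.correct) :
    (∀ v, ¬ dirty v) ↔ (∀ v, state v = TxState.correct) := by
  constructor
  · intro hclean v
    induction v using hwf.induction with
    | _ v hpred =>
      by_contra hv
      exact hclean v ((hdirty v).2 ⟨(heligible v).2 hpred, hv⟩)
  · intro hcorrect v hv
    exact ((hdirty v).1 hv).2 (hcorrect v)

/-- Over a finite DAG of transactions (predecessor relation `E` well-founded),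
where a transaction is eligible iff all predecessors are `correct` and dirty
iff it is eligible with non-`correct` state: the execution is declared
successful (no dirty transactions) iff every transaction is `correct`. -/
theorem isc_success_iff_all_correct {V : Type*} [Fintype V]
    (E : V → V → Prop) (hwf : WellFounded E)
    (state : V → TxState)
    (eligible : V → Prop)
    (heligible : ∀ v, eligible v ↔ ∀ u, E u v → state u = TxState.correct)
    (dirty : V → Prop)
    (hdirty : ∀ v, dirty v ↔ eligible v ∧ state v ≠ TxState.correct) :
    (∀ v, ¬ dirty v) ↔ (∀ v, state v = TxState.correct) :=
  isc_success_iff_all_correct_general E hwf state eligible heligible dirty hdirty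
end

section
/- Given a Merkle tree where each internal node's label is H(left label, right label) for a collision-resistant hash H, if two leaves at the same position produce valid authentication paths to the same root, then either the leaves are equal or a hash collision of H can be extracted from the two paths. -/
/-- Fold a hash function along a Merkle authentication path: each step hashes
the accumulator with the sibling, on the side given by the direction bit. -/
def merkleFold {α : Type*} (H : α × α → α) (x : α) (path : List (Bool × α)) : α :=
  path.foldl (fun acc step => if step.1 then H (step.2, acc) else H (acc, step.2)) x

/-! With an injective `H` every hashing step is injective in the accumulator, so the leaf is
determined by the root and the direction bits; a non-injective `H` is itself a collision. -/

section MerkleFold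

variable {α : Type*} {H : α × α → α}

theorem merkleFold_cons (x : α) (step : Bool × α) (path : List (Bool × α)) :
    merkleFold H x (step :: path) =
      merkleFold H (if step.1 then H (step.2, x) else H (x, step.2)) path := rfl

theorem eq_of_hashStep_eq (hH : Function.Injective H) {d : Bool} {x₁ x₂ s₁ s₂ : α}
    (h : (if d then H (s₁, x₁) else H (x₁, s₁)) = if d then H (s₂, x₂) else H (x₂, s₂)) :
    x₁ = x₂ := by
  cases d <;> simp_all [hH.eq_iff]

theorem eq_of_merkleFold_eq (hH : Function.Injective H) {x₁ x₂ : α} {p₁ p₂ : List (Bool × α)}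
    (hdir : p₁.map Prod.fst = p₂.map Prod.fst)
    (h : merkleFold H x₁ p₁ = merkleFold H x₂ p₂) : x₁ = x₂ := by
  induction p₁ generalizing p₂ x₁ x₂ with
  | nil =>
    obtain rfl : p₂ = [] := List.map_eq_nil_iff.mp hdir.symm
    exact h
  | cons step₁ t₁ ih =>
    obtain _ | ⟨step₂, t₂⟩ := p₂
    · exact absurd hdir (List.cons_ne_nil _ _)
    obtain ⟨hd, ht⟩ := List.cons.inj hdir
    rw [merkleFold_cons, merkleFold_cons, hd] at h
    exact eq_of_hashStep_eq hH (ih ht h)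

end MerkleFold

theorem merkle_binding_general {α : Type*} (H : α × α → α)
    (x₁ x₂ r : α) (p₁ p₂ : List (Bool × α))
    (hdir : p₁.map Prod.fst = p₂.map Prod.fst)
    (h₁ : merkleFold H x₁ p₁ = r)
    (h₂ : merkleFold H x₂ p₂ = r) :
    x₁ = x₂ ∨ ∃ a b : α × α, a ≠ b ∧ H a = H b := by
  by_cases hH : Function.Injective H
  · exact Or.inl (eq_of_merkleFold_eq hH hdir (h₁.trans h₂.symm))
  · obtain ⟨a, b, hab, hne⟩ := Function.not_injective_iff.mp hH
    exact Or.inr ⟨a, b, hne, hab⟩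

/-- If two leaves at the same position (paths of the same length with the same
directions at every step) both authenticate to the same Merkle root, then
either the leaves are equal or a collision of `H` can be extracted. -/
theorem merkle_binding {α : Type*} (H : α × α → α)
    (x₁ x₂ r : α) (p₁ p₂ : List (Bool × α))
    (hlen : p₁.length = p₂.length)
    (hdir : p₁.map Prod.fst = p₂.map Prod.fst)
    (h₁ : merkleFold H x₁ p₁ = r)
    (h₂ : merkleFold H x₂ p₂ = r) :
    x₁ = x₂ ∨ ∃ a b : α × α, a ≠ b ∧ H a = H b :=
  merkle_binding_general H x₁ x₂ r p₁ p₂ hdir h₁ h₂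
end

section
/- If each of the two parties (VES and dApp client) in a UIP session follows the protocol honestly and every on-chain transaction achieves finality within a bounded number of NSB blocks b, and every transaction's deadline constraint allows at least b blocks, then (by induction on the DAG) every transaction in the dependency graph eventually reaches state correct, i.e., the execution is guaranteed to finish correctly. -/
theorem correctAt_of_depth_le {V : Type*} (E : V → V → Prop) (correctAt : ℕ → V → Prop)
    (b : ℕ) (hstep : ∀ (h : ℕ) (v : V), (∀ u, E u v → correctAt h u) → correctAt (h + b) v)
    (depth : V → ℕ) (hdepth : ∀ u v, E u v → depth u < depth v) :
    ∀ (n : ℕ) (v : V), depth v ≤ n → correctAt (b * (n + 1)) v := by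
  intro n
  induction n with
  | zero =>
    intro v _
    simpa using hstep 0 v fun u huv => absurd (hdepth u v huv) (by omega)
  | succ n ih =>
    intro v hv
    have hpred : ∀ u, E u v → correctAt (b * (n + 1)) u :=
      fun u huv => ih u (by have := hdepth u v huv; omega)
    simpa only [Nat.mul_succ] using hstep _ v hpred

theorem honest_execution_finishes_general {V : Type*}
    (E : V → V → Prop)
    (correctAt : ℕ → V → Prop)
    (b : ℕ)
    (hstep : ∀ (h : ℕ) (v : V), (∀ u, E u v → correctAt h u) → correctAt (h + b) v)
    (depth : V → ℕ) (L : ℕ)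
    (hdepth : ∀ u v, E u v → depth u < depth v)
    (hL : ∀ v, depth v ≤ L) :
    ∃ H : ℕ, H ≤ b * (L + 1) ∧ ∀ v : V, correctAt H v :=
  ⟨b * (L + 1), le_rfl,
    fun v => correctAt_of_depth_le E correctAt b hstep depth hdepth L v (hL v)⟩

/-- If both parties are honest — once all of a transaction's predecessors are
correct at height `h`, the transaction is correct by height `h + b` (finality
within `b` NSB blocks and every deadline allows at least `b` blocks) —
then every transaction in the finite dependency DAG eventually reaches state
correct; indeed all are correct by height `b * (L + 1)` where `L` bounds the
depth (longest path length) of the DAG. -/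
theorem honest_execution_finishes {V : Type*} [Fintype V]
    (E : V → V → Prop)
    (correctAt : ℕ → V → Prop)
    (hmono : ∀ h h' v, h ≤ h' → correctAt h v → correctAt h' v)
    (b : ℕ)
    (hstep : ∀ (h : ℕ) (v : V), (∀ u, E u v → correctAt h u) → correctAt (h + b) v)
    (depth : V → ℕ) (L : ℕ)
    (hdepth : ∀ u v, E u v → depth u < depth v)
    (hL : ∀ v, depth v ≤ L) :
    ∃ H : ℕ, H ≤ b * (L + 1) ∧ ∀ v : V, correctAt H v :=
  honest_execution_finishes_general E correctAt b hstep depth L hdepth hL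
end
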